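/- Let x_0 ∈ ℝ^n and r_0 = P(A x_0 − b). Let (x_k) be a full NGMRESr sequence starting from x_0: for each k, x_{k+1} = q(x_k) + Σ_{i=0}^{k} β_i^{(k)} (q(x_k) − x_{k−i}) where β^{(k)} ∈ ℝ^{k+1} minimizes ‖P(A x_{k+1} − b)‖ over all coefficient vectors. Let (x_k^{Gl}) be a left-preconditioned GMRES sequence with x_0^{Gl} = x_0: for each k, x_k^{Gl} ∈ x_0 + K_k(PA, r_0) and ‖P(A x_k^{Gl} − b)‖ ≤ ‖P(A y − b)‖ for every y ∈ x_0 + K_k(PA, r_0); write r_k^{Gl} = P(A x_k^{Gl} − b). Assume that for some k* ∈ ℤ^+, r_{k*−1}^{Gl} ≠ 0 and ‖r_k^{Gl}‖ < ‖r_{k−1}^{Gl}‖ for all integers k with 0 < k < k*. Then x_k = x_k^{Gl} for all 0 ≤ k ≤ k*. -/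
import Mathlib

open scoped RealInnerProductSpace

/-- Matrix-vector multiplication on Euclidean space. -/
noncomputable def mulV {n : ℕ} (M : Matrix (Fin n) (Fin n) ℝ)
    (v : EuclideanSpace ℝ (Fin n)) : EuclideanSpace ℝ (Fin n) :=
  Matrix.toEuclideanLin M v

/-- Krylov subspace `K_k(M, v) = span {v, M v, …, M^(k-1) v}`. -/
noncomputable def Krylov {n : ℕ} (M : Matrix (Fin n) (Fin n) ℝ)
    (v : EuclideanSpace ℝ (Fin n)) (k : ℕ) : Submodule ℝ (EuclideanSpace ℝ (Fin n)) :=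
  Submodule.span ℝ (Set.range fun i : Fin k => mulV (M ^ (i : ℕ)) v)

lemma mulV_add {n} (M : Matrix (Fin n) (Fin n) ℝ) (u v) : mulV M (u+v) = mulV M u + mulV M v := map_add _ _ _
lemma mulV_sub {n} (M : Matrix (Fin n) (Fin n) ℝ) (u v) : mulV M (u-v) = mulV M u - mulV M v := map_sub _ _ _
lemma mulV_smul {n} (M : Matrix (Fin n) (Fin n) ℝ) (c : ℝ) (v) : mulV M (c • v) = c • mulV M v := map_smul _ _ _
lemma mulV_zero {n} (M : Matrix (Fin n) (Fin n) ℝ) : mulV M 0 = 0 := map_zero _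
lemma mulV_one {n} (v : EuclideanSpace ℝ (Fin n)) : mulV 1 v = v := by
  simp [mulV, Matrix.toEuclideanLin]
lemma mulV_mulV {n} (M N : Matrix (Fin n) (Fin n) ℝ) (v) : mulV M (mulV N v) = mulV (M*N) v := by
  simp [mulV, Matrix.toEuclideanLin, Matrix.toLin'_mul]

lemma mulV_inj {n} (M : Matrix (Fin n) (Fin n) ℝ) (hM : IsUnit M.det) {u v}
    (h : mulV M u = mulV M v) : u = v := by
  have h1 : mulV M⁻¹ (mulV M u) = mulV M⁻¹ (mulV M v) := by rw [h]
  rw [mulV_mulV, mulV_mulV, Matrix.nonsing_inv_mul _ hM, mulV_one, mulV_one] at h1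
  exact h1

lemma Krylov_mono {n} (M : Matrix (Fin n) (Fin n) ℝ) (v) {j k : ℕ} (h : j ≤ k) :
    Krylov M v j ≤ Krylov M v k := by
  apply Submodule.span_mono
  rintro _ ⟨i, rfl⟩
  exact ⟨⟨i, lt_of_lt_of_le i.2 h⟩, rfl⟩

lemma Krylov_zero {n} (M : Matrix (Fin n) (Fin n) ℝ) (v) : Krylov M v 0 = ⊥ := by
  simp [Krylov, Set.range_eq_empty]

lemma pow_mem_Krylov {n} (M : Matrix (Fin n) (Fin n) ℝ) (v) {i k : ℕ} (h : i < k) :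
    mulV (M ^ i) v ∈ Krylov M v k :=
  Submodule.subset_span ⟨⟨i, h⟩, rfl⟩

lemma self_mem_Krylov {n} (M : Matrix (Fin n) (Fin n) ℝ) (v) {k : ℕ} (h : 0 < k) :
    v ∈ Krylov M v k := by
  have := pow_mem_Krylov M v h
  rwa [pow_zero, mulV_one] at this

lemma mulV_mem_Krylov_succ {n} (M : Matrix (Fin n) (Fin n) ℝ) (v) {k : ℕ} {z}
    (hz : z ∈ Krylov M v k) : mulV M z ∈ Krylov M v (k+1) := by
  induction hz using Submodule.span_induction with
  | mem w hw =>
    obtain ⟨i, rfl⟩ := hw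
    rw [mulV_mulV, ← pow_succ']
    exact pow_mem_Krylov M v (by omega : (i:ℕ)+1 < k+1)
  | zero => rw [mulV_zero]; exact zero_mem _
  | add a b _ _ ha hb => rw [mulV_add]; exact add_mem ha hb
  | smul c a _ ha => rw [mulV_smul]; exact Submodule.smul_mem _ _ ha

lemma Krylov_succ_decomp {n} (M : Matrix (Fin n) (Fin n) ℝ) (v) {k : ℕ} {z}
    (hz : z ∈ Krylov M v (k+1)) :
    ∃ y ∈ Krylov M v k, ∃ c : ℝ, z = y + c • mulV (M ^ k) v := by
  rw [Krylov, Submodule.mem_span_range_iff_exists_fun] at hz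
  obtain ⟨c, hc⟩ := hz
  refine ⟨∑ i : Fin k, c i.castSucc • mulV (M ^ (i:ℕ)) v, ?_, c (Fin.last k), ?_⟩
  · exact Submodule.sum_mem _ fun i _ => Submodule.smul_mem _ _ (pow_mem_Krylov M v i.2)
  · rw [← hc, Fin.sum_univ_castSucc]
    simp

lemma span_fin_mono {E : Type*} [AddCommGroup E] [Module ℝ E] (f : ℕ → E) {j k : ℕ} (h : j ≤ k) :
    Submodule.span ℝ (Set.range fun i : Fin j => f i) ≤
      Submodule.span ℝ (Set.range fun i : Fin k => f i) := by
  apply Submodule.span_mono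
  rintro _ ⟨i, rfl⟩
  exact ⟨⟨i, lt_of_lt_of_le i.2 h⟩, rfl⟩

lemma min_unique {E : Type*} [NormedAddCommGroup E] [InnerProductSpace ℝ E]
    (W : Submodule ℝ E) (u : E) {w1 w2 : E} (h1 : w1 ∈ W) (h2 : w2 ∈ W)
    (m1 : ∀ w ∈ W, ‖u - w1‖ ≤ ‖u - w‖) (m2 : ∀ w ∈ W, ‖u - w2‖ ≤ ‖u - w‖) : w1 = w2 := by
  have hm : (2:ℝ)⁻¹ • (w1 + w2) ∈ W := Submodule.smul_mem _ _ (add_mem h1 h2)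
  have heq : ‖u - w1‖ = ‖u - w2‖ := le_antisymm (m1 _ h2) (m2 _ h1)
  have hpar := parallelogram_law_with_norm ℝ (u - (2:ℝ)⁻¹ • (w1 + w2)) ((2:ℝ)⁻¹ • (w2 - w1))
  have e1 : u - (2:ℝ)⁻¹ • (w1 + w2) + (2:ℝ)⁻¹ • (w2 - w1) = u - w1 := by module
  have e2 : u - (2:ℝ)⁻¹ • (w1 + w2) - (2:ℝ)⁻¹ • (w2 - w1) = u - w2 := by module
  rw [e1, e2] at hpar
  have h3 := m1 _ hm
  rw [heq] at hpar h3
  have hb : ‖(2:ℝ)⁻¹ • (w2 - w1)‖ * ‖(2:ℝ)⁻¹ • (w2 - w1)‖ ≤ 0 := by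
    linarith [mul_self_le_mul_self (norm_nonneg (u - w2)) h3]
  have h4 : ‖(2:ℝ)⁻¹ • (w2 - w1)‖ = 0 :=
    le_antisymm (by nlinarith [mul_self_nonneg ‖(2:ℝ)⁻¹ • (w2 - w1)‖]) (norm_nonneg _)
  have h5 : (2:ℝ)⁻¹ • (w2 - w1) = 0 := norm_eq_zero.mp h4
  have h6 : w2 - w1 = 0 := by
    have := congrArg (fun y => (2:ℝ) • y) h5
    simpa [smul_smul] using this
  exact (sub_eq_zero.mp h6).symm

/-- full NGMRESr on preconditioned Richardson equals left-preconditioned GMRES. -/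
theorem stmt_18 {n : ℕ} (A P : Matrix (Fin n) (Fin n) ℝ)
    (hA : IsUnit A.det) (hP : IsUnit P.det)
    (b : EuclideanSpace ℝ (Fin n))
    (q : EuclideanSpace ℝ (Fin n) → EuclideanSpace ℝ (Fin n))
    (hq : ∀ y, q y = y + mulV P (b - mulV A y))
    (x xG : ℕ → EuclideanSpace ℝ (Fin n))
    (r0 : EuclideanSpace ℝ (Fin n)) (hr0 : r0 = mulV P (mulV A (x 0) - b))
    -- full NGMRESr sequence
    (β : ℕ → ℕ → ℝ)
    (hstep : ∀ k, x (k + 1) =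
      q (x k) + ∑ i ∈ Finset.range (k + 1), β k i • (q (x k) - x (k - i)))
    (hopt : ∀ k, ∀ c : ℕ → ℝ,
      ‖mulV P (mulV A (x (k + 1)) - b)‖ ≤
      ‖mulV P (mulV A (q (x k) +
          ∑ i ∈ Finset.range (k + 1), c i • (q (x k) - x (k - i))) - b)‖)
    -- left-preconditioned GMRES sequence
    (hG0 : xG 0 = x 0)
    (hGmem : ∀ k, ∃ z ∈ Krylov (P * A) r0 k, xG k = x 0 + z)
    (hGopt : ∀ k, ∀ z ∈ Krylov (P * A) r0 k,
      ‖mulV P (mulV A (xG k) - b)‖ ≤ ‖mulV P (mulV A (x 0 + z) - b)‖)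
    (kstar : ℕ) (hkstar : 0 < kstar)
    (hne : mulV P (mulV A (xG (kstar - 1)) - b) ≠ 0)
    (hdec : ∀ k, 0 < k → k < kstar →
      ‖mulV P (mulV A (xG k) - b)‖ < ‖mulV P (mulV A (xG (k - 1)) - b)‖) :
    ∀ k ≤ kstar, x k = xG k := by
  have hMdet : IsUnit (P * A).det := by rw [Matrix.det_mul]; exact hP.mul hA
  -- residual formula
  have res : ∀ y, mulV P (mulV A y - b) = r0 + mulV (P*A) (y - x 0) := by
    intro y
    rw [hr0, ← mulV_mulV, ← mulV_add, mulV_sub A]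
    congr 1
    abel
  have qres : ∀ y, q y = y - mulV P (mulV A y - b) := by
    intro y
    rw [hq y, show (b - mulV A y) = -(mulV A y - b) from by abel,
      show mulV P (-(mulV A y - b)) = -(mulV P (mulV A y - b)) from map_neg _ _]
    abel
  have hzmem : ∀ j, xG j - x 0 ∈ Krylov (P*A) r0 j := by
    intro j
    obtain ⟨w, hw, hxw⟩ := hGmem j
    rw [hxw, add_sub_cancel_left]
    exact hw
  have zstep : ∀ j, 0 < j → j < kstar → xG j - x 0 ∉ Krylov (P*A) r0 (j-1) := by
    intro j hj hjk hmem
    have h1 := hGopt (j-1) _ hmem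
    rw [show x 0 + (xG j - x 0) = xG j from by abel] at h1
    exact absurd h1 (not_le.mpr (hdec j hj hjk))
  have spanZ : ∀ k, k < kstar → Krylov (P*A) r0 k ≤
      Submodule.span ℝ (Set.range fun j : Fin k => xG (j+1) - x 0) := by
    intro k
    induction k with
    | zero => intro _; rw [Krylov_zero]; exact bot_le
    | succ k IH =>
      intro hk1
      have IH' := IH (Nat.lt_of_succ_lt hk1)
      intro z hz
      obtain ⟨y, hy, c, rfl⟩ := Krylov_succ_decomp _ _ hz
      have hZmono := span_fin_mono (fun j => xG (j+1) - x 0) (Nat.le_succ k)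
      have hzk1 : xG (k+1) - x 0 ∈
          Submodule.span ℝ (Set.range fun j : Fin (k+1) => xG (j+1) - x 0) :=
        Submodule.subset_span ⟨⟨k, Nat.lt_succ_self k⟩, rfl⟩
      have hMk : mulV ((P*A)^k) r0 ∈
          Submodule.span ℝ (Set.range fun j : Fin (k+1) => xG (j+1) - x 0) := by
        obtain ⟨y', hy', c', hd⟩ := Krylov_succ_decomp _ _ (hzmem (k+1))
        have hc' : c' ≠ 0 := by
          intro h0
          apply zstep (k+1) (Nat.succ_pos k) hk1
          have : (k+1) - 1 = k := rfl
          rw [this, hd, h0, zero_smul, add_zero]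
          exact hy'
        have hrep : mulV ((P*A)^k) r0 = c'⁻¹ • ((xG (k+1) - x 0) - y') := by
          rw [hd, show y' + c' • mulV ((P*A)^k) r0 - y' = c' • mulV ((P*A)^k) r0 from by abel,
            smul_smul, inv_mul_cancel₀ hc', one_smul]
        rw [hrep]
        exact Submodule.smul_mem _ _ (sub_mem hzk1 (hZmono (IH' hy')))
      exact add_mem (hZmono (IH' hy)) (Submodule.smul_mem _ _ hMk)
  -- main induction
  intro k
  induction k using Nat.strong_induction_on with
  | _ k ih =>
    intro hk
    cases k with
    | zero => exact hG0.symm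
    | succ m =>
      have hmlt : m < kstar := Nat.lt_of_succ_le hk
      have hxj : ∀ j, j ≤ m → x j = xG j := fun j hj =>
        ih j (Nat.lt_succ_of_le hj) (le_trans hj (le_of_lt hmlt))
      have hxm : x m = xG m := hxj m le_rfl
      -- rm ∈ K1
      have hrm : mulV P (mulV A (x m) - b) = r0 + mulV (P*A) (x m - x 0) := res (x m)
      have hxmK : x m - x 0 ∈ Krylov (P*A) r0 m := by rw [hxm]; exact hzmem m
      have hrmK : mulV P (mulV A (x m) - b) ∈ Krylov (P*A) r0 (m+1) := by
        rw [hrm]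
        exact add_mem (self_mem_Krylov _ _ (Nat.succ_pos m)) (mulV_mem_Krylov_succ _ _ hxmK)
      have hqmK : q (x m) - x 0 ∈ Krylov (P*A) r0 (m+1) := by
        rw [qres (x m), show x m - mulV P (mulV A (x m) - b) - x 0
          = (x m - x 0) - mulV P (mulV A (x m) - b) from by abel]
        exact sub_mem (Krylov_mono _ _ (Nat.le_succ m) hxmK) hrmK
      -- directions lie in K1
      have hDK : ∀ i : ℕ, i ≤ m → q (x m) - x (m - i) ∈ Krylov (P*A) r0 (m+1) := by
        intro i _
        have him : m - i ≤ m := Nat.sub_le _ _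
        rw [show q (x m) - x (m - i) = (q (x m) - x 0) - (x (m-i) - x 0) from by abel,
          hxj (m-i) him]
        exact sub_mem hqmK (Krylov_mono _ _ (le_trans him (Nat.le_succ m)) (hzmem (m-i)))
      -- span of directions contains K1
      have hrmSD : mulV P (mulV A (x m) - b) ∈
          Submodule.span ℝ (Set.range fun i : Fin (m+1) => q (x m) - x (m - ↑i)) := by
        have h2 : q (x m) - x (m - 0) ∈
            Submodule.span ℝ (Set.range fun i : Fin (m+1) => q (x m) - x (m - ↑i)) :=
          Submodule.subset_span ⟨⟨0, Nat.succ_pos m⟩, rfl⟩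
        rw [Nat.sub_zero] at h2
        rw [show mulV P (mulV A (x m) - b) = -(q (x m) - x m) from by rw [qres (x m)]; abel]
        exact neg_mem h2
      have hDj : ∀ j, j ≤ m → x m - x j ∈
          Submodule.span ℝ (Set.range fun i : Fin (m+1) => q (x m) - x (m - ↑i)) := by
        intro j hj
        have h1 : q (x m) - x (m - (m - j)) ∈
            Submodule.span ℝ (Set.range fun i : Fin (m+1) => q (x m) - x (m - ↑i)) :=
          Submodule.subset_span ⟨⟨m - j, by omega⟩, rfl⟩
        have h2 : q (x m) - x (m - 0) ∈
            Submodule.span ℝ (Set.range fun i : Fin (m+1) => q (x m) - x (m - ↑i)) :=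
          Submodule.subset_span ⟨⟨0, Nat.succ_pos m⟩, rfl⟩
        rw [Nat.sub_sub_self hj] at h1
        rw [Nat.sub_zero] at h2
        rw [show x m - x j = (q (x m) - x j) - (q (x m) - x m) from by abel]
        exact sub_mem h1 h2
      have hzSD : ∀ j, j ≤ m → x j - x 0 ∈
          Submodule.span ℝ (Set.range fun i : Fin (m+1) => q (x m) - x (m - ↑i)) := by
        intro j hj
        rw [show x j - x 0 = (x m - x 0) - (x m - x j) from by abel]
        exact sub_mem (hDj 0 (Nat.zero_le m)) (hDj j hj)
      have hKmSD : Krylov (P*A) r0 m ≤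
          Submodule.span ℝ (Set.range fun i : Fin (m+1) => q (x m) - x (m - ↑i)) := by
        refine le_trans (spanZ m hmlt) ?_
        rw [Submodule.span_le]
        rintro _ ⟨j, rfl⟩
        have hj1 : (j:ℕ) + 1 ≤ m := j.2
        have h := hzSD ((j:ℕ)+1) hj1
        rw [hxj ((j:ℕ)+1) hj1] at h
        exact h
      have topSD : mulV ((P*A)^m) r0 ∈
          Submodule.span ℝ (Set.range fun i : Fin (m+1) => q (x m) - x (m - ↑i)) := by
        rcases Nat.eq_zero_or_pos m with hm0 | hmpos
        · subst hm0
          rw [pow_zero, mulV_one]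
          have : r0 = mulV P (mulV A (x 0) - b) := hr0
          rw [this]
          exact hrmSD
        · obtain ⟨l, rfl⟩ : ∃ l, m = l + 1 := ⟨m - 1, by omega⟩
          obtain ⟨y', hy', c', hd⟩ := Krylov_succ_decomp _ _ (hzmem (l+1))
          have hc' : c' ≠ 0 := by
            intro h0
            apply zstep (l+1) (Nat.succ_pos l) hmlt
            have : (l+1) - 1 = l := rfl
            rw [this, hd, h0, zero_smul, add_zero]
            exact hy'
          -- mulV (P*A) (xG (l+1) - x 0) = mulV (P*A) y' + c' • mulV ((P*A)^(l+1)) r0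
          have hap : mulV (P*A) (xG (l+1) - x 0)
              = mulV (P*A) y' + c' • mulV ((P*A)^(l+1)) r0 := by
            rw [hd, mulV_add, mulV_smul, mulV_mulV, ← pow_succ']
          have hrep : mulV ((P*A)^(l+1)) r0
              = c'⁻¹ • (mulV (P*A) (xG (l+1) - x 0) - mulV (P*A) y') := by
            rw [hap, show mulV (P*A) y' + c' • mulV ((P*A)^(l+1)) r0 - mulV (P*A) y'
                = c' • mulV ((P*A)^(l+1)) r0 from by abel,
              smul_smul, inv_mul_cancel₀ hc', one_smul]
          rw [hrep]
          apply Submodule.smul_mem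
          apply sub_mem
          · -- mulV (P*A) (xG (l+1) - x 0) = rm - r0 ∈ SD
            have : mulV (P*A) (xG (l+1) - x 0)
                = mulV P (mulV A (x (l+1)) - b) - r0 := by
              rw [hrm, hxm]; abel
            rw [this]
            exact sub_mem hrmSD (hKmSD (self_mem_Krylov _ _ (Nat.succ_pos l)))
          · exact hKmSD (mulV_mem_Krylov_succ _ _ hy')
      have hK1SD : Krylov (P*A) r0 (m+1) ≤
          Submodule.span ℝ (Set.range fun i : Fin (m+1) => q (x m) - x (m - ↑i)) := by
        intro z hz
        obtain ⟨y, hy, c, rfl⟩ := Krylov_succ_decomp _ _ hz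
        exact add_mem (hKmSD hy) (Submodule.smul_mem _ _ topSD)
      -- optimality of x (m+1) over x 0 + K1
      have xopt : ∀ z ∈ Krylov (P*A) r0 (m+1),
          ‖mulV P (mulV A (x (m+1)) - b)‖ ≤ ‖mulV P (mulV A (x 0 + z) - b)‖ := by
        intro z hz
        have hmem : x 0 + z - q (x m) ∈
            Submodule.span ℝ (Set.range fun i : Fin (m+1) => q (x m) - x (m - ↑i)) := by
          rw [show x 0 + z - q (x m) = z - (q (x m) - x 0) from by abel]
          exact hK1SD (sub_mem hz hqmK)
        rw [Submodule.mem_span_range_iff_exists_fun] at hmem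
        obtain ⟨c, hc⟩ := hmem
        have hce := hopt m (fun i => if h : i < m+1 then c ⟨i, h⟩ else 0)
        have hsum : (∑ i ∈ Finset.range (m+1),
            (if h : i < m+1 then c ⟨i, h⟩ else 0) • (q (x m) - x (m - i)))
            = ∑ i : Fin (m+1), c i • (q (x m) - x (m - ↑i)) := by
          rw [← Fin.sum_univ_eq_sum_range]
          apply Finset.sum_congr rfl
          intro i _
          simp [i.2]
        rw [hsum, hc, show q (x m) + (x 0 + z - q (x m)) = x 0 + z from by abel] at hce
        exact hce
      -- membership of x (m+1)
      have xmemK : x (m+1) - x 0 ∈ Krylov (P*A) r0 (m+1) := by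
        rw [hstep m, show q (x m) + (∑ i ∈ Finset.range (m+1), β m i • (q (x m) - x (m - i))) - x 0
            = (q (x m) - x 0) + ∑ i ∈ Finset.range (m+1), β m i • (q (x m) - x (m - i)) from by abel]
        refine add_mem hqmK (Submodule.sum_mem _ fun i hi => Submodule.smul_mem _ _ ?_)
        exact hDK i (by simpa using Nat.lt_succ_iff.mp (Finset.mem_range.mp hi))
      -- GMRES iterate
      obtain ⟨zG, hzG, hxGe⟩ := hGmem (m+1)
      -- norm rewriting
      have nres : ∀ z', ‖-r0 - mulV (P*A) z'‖ = ‖mulV P (mulV A (x 0 + z') - b)‖ := by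
        intro z'
        rw [res (x 0 + z'), add_sub_cancel_left,
          show -r0 - mulV (P*A) z' = -(r0 + mulV (P*A) z') from by abel, norm_neg]
      -- uniqueness of minimizer
      have hw1 : mulV (P*A) (x (m+1) - x 0) ∈
          Submodule.map (Matrix.toEuclideanLin (P*A)) (Krylov (P*A) r0 (m+1)) :=
        Submodule.mem_map_of_mem xmemK
      have hw2 : mulV (P*A) zG ∈
          Submodule.map (Matrix.toEuclideanLin (P*A)) (Krylov (P*A) r0 (m+1)) :=
        Submodule.mem_map_of_mem hzG
      have m1 : ∀ w ∈ Submodule.map (Matrix.toEuclideanLin (P*A)) (Krylov (P*A) r0 (m+1)),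
          ‖-r0 - mulV (P*A) (x (m+1) - x 0)‖ ≤ ‖-r0 - w‖ := by
        intro w hw
        obtain ⟨z', hz', hwz⟩ := hw
        have e : ‖-r0 - w‖ = ‖mulV P (mulV A (x 0 + z') - b)‖ := by
          rw [← hwz]; exact nres z'
        rw [nres, e, show x 0 + (x (m+1) - x 0) = x (m+1) from by abel]
        exact xopt z' hz'
      have m2 : ∀ w ∈ Submodule.map (Matrix.toEuclideanLin (P*A)) (Krylov (P*A) r0 (m+1)),
          ‖-r0 - mulV (P*A) zG‖ ≤ ‖-r0 - w‖ := by
        intro w hw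
        obtain ⟨z', hz', hwz⟩ := hw
        have e : ‖-r0 - w‖ = ‖mulV P (mulV A (x 0 + z') - b)‖ := by
          rw [← hwz]; exact nres z'
        rw [nres, e, ← hxGe]
        exact hGopt (m+1) z' hz'
      have := min_unique _ (-r0) hw1 hw2 m1 m2
      have hxx : x (m+1) - x 0 = zG := mulV_inj _ hMdet this
      rw [hxGe, ← hxx]
      abel
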